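/- Let E be a Dedekind complete Riesz space and E^u its universal completion. If a sequence (X_n) in E is order convergent to X ∈ E in E^u, then (X_n) is uo-convergent to X in E. -/
import Mathlib

variable {E : Type*} [AddCommGroup E] [Lattice E]
  [CovariantClass E E (· + ·) (· ≤ ·)] [Module ℝ E]
variable {Eu : Type*} [AddCommGroup Eu] [Lattice Eu]
  [CovariantClass Eu Eu (· + ·) (· ≤ ·)] [Module ℝ Eu]

/-- Order convergence of a sequence `Y` to `0`. -/
def OrdConvZero {F : Type*} [AddCommGroup F] [Lattice F] (Y : ℕ → F) : Prop :=
  ∃ V : ℕ → F, Antitone V ∧ IsGLB (Set.range V) 0 ∧ ∀ n, |Y n| ≤ V n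

/-- Unbounded order convergence of a sequence to `x`. -/
def UoConv {F : Type*} [AddCommGroup F] [Lattice F] (X : ℕ → F) (x : F) : Prop :=
  ∀ Z : F, 0 ≤ Z → OrdConvZero (fun n => |X n - x| ⊓ Z)

/-- `E` is Dedekind complete. -/
def DedekindComplete (E : Type*) [AddCommGroup E] [Lattice E] : Prop :=
  ∀ A : Set E, A.Nonempty → BddAbove A → ∃ s, IsLUB A s

/-- If a sequence of `E` is order convergent in the universal completion `Eu`
(`E` being an order dense ideal of `Eu` via the Riesz embedding `ι`), then
it is uo-convergent in `E`. -/
theorem uoConv_of_orderConv_univCompletion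
    (hE : DedekindComplete E)
    (ι : E →ₗ[ℝ] Eu)
    (hinj : Function.Injective ι)
    (hlat : ∀ x y : E, ι (x ⊔ y) = ι x ⊔ ι y)
    (hdense : ∀ y : Eu, 0 < y → ∃ x : E, 0 < ι x ∧ ι x ≤ y)
    (hideal : ∀ (y : Eu) (x : E), |y| ≤ ι |x| → ∃ z : E, ι z = y)
    (X : ℕ → E) (x : E)
    (hconv : ∃ V : ℕ → Eu, Antitone V ∧ IsGLB (Set.range V) 0 ∧
      ∀ n, |ι (X n) - ι x| ≤ V n) :
    UoConv X x := by
  obtain ⟨V, hVanti, hVglb, hVbd⟩ := hconv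
  -- ι preserves order
  have hmono : ∀ a b : E, a ≤ b → ι a ≤ ι b := by
    intro a b hab
    have : ι (a ⊔ b) = ι b := by rw [sup_eq_right.2 hab]
    rw [hlat] at this
    exact le_of_sup_eq this
  have hrefl : ∀ a b : E, ι a ≤ ι b → a ≤ b := by
    intro a b hab
    have : ι (a ⊔ b) = ι b := by rw [hlat]; exact sup_eq_right.2 hab
    exact le_of_sup_eq (hinj this)
  -- ι preserves inf and abs
  have hinf : ∀ a b : E, ι (a ⊓ b) = ι a ⊓ ι b := by
    intro a b
    have : a ⊓ b = -(-a ⊔ -b) := by rw [neg_sup, neg_neg, neg_neg]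
    rw [this, map_neg, hlat, map_neg, map_neg, neg_sup, neg_neg, neg_neg]
  have habs : ∀ a : E, ι |a| = |ι a| := by
    intro a
    rw [show |a| = a ⊔ -a from rfl, show |ι a| = ι a ⊔ -ι a from rfl, hlat, map_neg]
  intro Z hZ
  -- the dominating sequence in Eu
  set W : ℕ → Eu := fun n => V n ⊓ ι Z with hW
  have hV0 : ∀ n, 0 ≤ V n := fun n => (abs_nonneg _).trans (hVbd n)
  have hιZ : 0 ≤ ι Z := by simpa using hmono 0 Z hZ
  have hW0 : ∀ n, 0 ≤ W n := fun n => le_inf (hV0 n) hιZ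
  have hWZ : ∀ n, W n ≤ ι Z := fun n => inf_le_right
  -- pull W back to E
  have hy : ∀ n, ∃ z : E, ι z = W n := by
    intro n
    refine hideal (W n) Z ?_
    rw [abs_of_nonneg (hW0 n), abs_of_nonneg hZ]
    exact hWZ n
  choose U hU using hy
  refine ⟨U, ?_, ?_, ?_⟩
  · intro m n hmn
    refine hrefl _ _ ?_
    rw [hU, hU]
    exact inf_le_inf_right _ (hVanti hmn)
  · constructor
    · intro u hu
      obtain ⟨n, rfl⟩ := hu
      refine hrefl 0 (U n) ?_
      rw [hU]; simpa using hW0 n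
    · intro b hb
      refine hrefl b 0 ?_
      have : ∀ n, ι b ≤ V n := by
        intro n
        have h1 : ι b ≤ ι (U n) := hmono _ _ (hb ⟨n, rfl⟩)
        rw [hU n] at h1
        exact h1.trans inf_le_left
      have := hVglb.2 (fun v hv => by obtain ⟨n, rfl⟩ := hv; exact this n)
      simpa using this
  · intro n
    have hpos : 0 ≤ |X n - x| ⊓ Z := le_inf (abs_nonneg _) hZ
    rw [abs_of_nonneg hpos]
    refine hrefl _ _ ?_
    rw [hU, hinf, habs, map_sub]
    exact inf_le_inf_right _ (hVbd n)
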